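/- Let σ : ℝ → ℝ be defined by σ(x) = x - 0.2·sin(2πx). For every ε ∈ [0, 1/2) there exists a contraction factor λ_ε ∈ (0,1) such that for all δ ∈ [-ε, ε] and all n ∈ ℤ, |σ(n + δ) - n| ≤ λ_ε·|δ|. -/

import Mathlib

noncomputable def sigmaFn (x : ℝ) : ℝ := x - 0.2 * Real.sin (2 * Real.pi * x)

open Real in
lemma key_aux (ε : ℝ) (hε0 : 0 < ε) (hε : ε < 1/2) (δ : ℝ) (h0 : 0 ≤ δ) (h1 : δ ≤ ε) :
    |δ - 0.2 * Real.sin (2 * π * δ)|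
      ≤ max (0.4 * π - 1) (1 - 0.2 * Real.sin (2 * π * ε) / ε) * δ := by
  set lam := max (0.4 * π - 1) (1 - 0.2 * Real.sin (2 * π * ε) / ε) with hlam
  have hpi := Real.pi_gt_three
  rw [abs_le]
  constructor
  · -- lower bound: use sin x ≤ x
    have hs : Real.sin (2 * π * δ) ≤ 2 * π * δ :=
      Real.sin_le (by positivity)
    have h1' : (0.4 * π - 1) ≤ lam := le_max_left _ _
    nlinarith [Real.pi_pos]
  · -- upper bound: use concavity chord
    have hchord : (δ / ε) * Real.sin (2 * π * ε) ≤ Real.sin (2 * π * δ) := by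
      have hcc := strictConcaveOn_sin_Icc.concaveOn
      have h2 : (1 - δ/ε) • Real.sin 0 + (δ/ε) • Real.sin (2 * π * ε)
          ≤ Real.sin ((1 - δ/ε) • (0:ℝ) + (δ/ε) • (2 * π * ε)) :=
        hcc.2 (⟨le_refl 0, Real.pi_pos.le⟩ : (0:ℝ) ∈ Set.Icc 0 π)
          (⟨by positivity, by nlinarith [Real.pi_pos]⟩ : 2 * π * ε ∈ Set.Icc 0 π)
          (by have := div_le_one_of_le₀ h1 hε0.le; linarith)
          (by positivity) (by ring)
      simp only [smul_eq_mul, Real.sin_zero, mul_zero, zero_add] at h2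
      have heq : (δ/ε) * (2 * π * ε) = 2 * π * δ := by
        field_simp
      rw [heq] at h2
      linarith
    have h2' : (1 - 0.2 * Real.sin (2 * π * ε) / ε) ≤ lam := le_max_right _ _
    have hδε : δ / ε * Real.sin (2 * π * ε) = (Real.sin (2 * π * ε) / ε) * δ := by
      ring
    calc δ - 0.2 * Real.sin (2 * π * δ)
        ≤ δ - 0.2 * ((δ / ε) * Real.sin (2 * π * ε)) := by linarith
      _ = (1 - 0.2 * Real.sin (2 * π * ε) / ε) * δ := by field_simp
      _ ≤ lam * δ := mul_le_mul_of_nonneg_right h2' h0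

theorem stmt_2 (ε : ℝ) (hε : ε ∈ Set.Ico (0 : ℝ) (1/2)) :
    ∃ lam : ℝ, lam ∈ Set.Ioo (0 : ℝ) 1 ∧
      ∀ δ : ℝ, δ ∈ Set.Icc (-ε) ε → ∀ n : ℤ,
        |sigmaFn (n + δ) - n| ≤ lam * |δ| := by
  obtain ⟨hε0, hε1⟩ := hε
  have hpi3 := Real.pi_gt_three
  have hpi4 := Real.pi_lt_d2
  have hsigma : ∀ (δ : ℝ) (n : ℤ),
      sigmaFn (n + δ) - n = δ - 0.2 * Real.sin (2 * Real.pi * δ) := by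
    intro δ n
    have : 2 * Real.pi * ((n : ℝ) + δ) = 2 * Real.pi * δ + n * (2 * Real.pi) := by ring
    simp only [sigmaFn, this, Real.sin_add_int_mul_two_pi]
    ring
  rcases eq_or_lt_of_le hε0 with h | h
  · -- ε = 0
    refine ⟨1/2, ⟨by norm_num, by norm_num⟩, ?_⟩
    intro δ hδ n
    have hδ0 : δ = 0 := by
      rw [← h] at hδ; exact le_antisymm (by simpa using hδ.2) (by simpa using hδ.1)
    subst hδ0
    rw [hsigma 0 n]; simp
  · -- ε > 0
    set lam := max (0.4 * Real.pi - 1) (1 - 0.2 * Real.sin (2 * Real.pi * ε) / ε) with hlam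
    have hsinpos : 0 < Real.sin (2 * Real.pi * ε) := by
      apply Real.sin_pos_of_pos_of_lt_pi
      · positivity
      · nlinarith
    refine ⟨lam, ⟨?_, ?_⟩, ?_⟩
    · exact lt_max_of_lt_left (by nlinarith)
    · apply max_lt
      · nlinarith
      · have : 0 < 0.2 * Real.sin (2 * Real.pi * ε) / ε := by positivity
        linarith
    · intro δ hδ n
      rw [hsigma δ n]
      rcases le_or_gt 0 δ with hd | hd
      · rw [abs_of_nonneg hd]
        exact key_aux ε h hε1 δ hd hδ.2
      · have h' := key_aux ε h hε1 (-δ) (by linarith) (by linarith [hδ.1])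
        rw [abs_of_neg hd]
        have : |δ - 0.2 * Real.sin (2 * Real.pi * δ)|
            = |(-δ) - 0.2 * Real.sin (2 * Real.pi * (-δ))| := by
          rw [mul_neg, Real.sin_neg]
          rw [← abs_neg]
          ring_nf
        rw [this]
        exact h'
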